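/- Let r > 0 and let f : ℂ → ℂ be holomorphic on the strip S(r) and bounded on S(r), and suppose f is not identically zero on S(r). Let z : ℕ → S(r) be an injective sequence with f(z_n) = 0 for all n, and write z_n = x_n + i y_n with x_n, y_n ∈ ℝ. Then the series Σ_{n ≥ 0} e^{π x_n/(2r)} cos(π y_n/(2r)) / ( (e^{π x_n/r} + 1)² − 4 e^{π x_n/r} cos²(π y_n/(2r)) )^{1/2} converges. -/

import Mathlib

/-- The horizontal strip `S(r) = {z ∈ ℂ : |Im z| < r}`. -/
def strip (r : ℝ) : Set ℂ := {z : ℂ | |z.im| < r}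

/-!
The map `z ↦ tanh (π z / (4 r)) = (e^{π z / (2r)} - 1) / (e^{π z / (2r)} + 1)` sends the strip
conformally onto the unit disc, with inverse `w ↦ (2 r / π) log ((1 + w) / (1 - w))`. Transported to
the disc, `f` becomes a bounded holomorphic function `g ≢ 0` with zeros `a n`, which satisfy the
Blaschke condition `∑ (1 - ‖a n‖²) < ∞`: dividing `g` by the Blaschke factors of finitely many zeros
keeps its bound `M` (maximum modulus principle), so `‖g w‖ ≤ M ∏ ‖(w - a n) / (1 - conj (a n) w)‖`.
The `n`-th term of the series is exactly `(1 - ‖a n‖²) / (4 ‖a n‖)`, and `‖a n‖ → 1`.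
-/

open Complex Metric Filter Topology ComplexConjugate Function
open scoped Real

noncomputable def blaschkeFactor (a w : ℂ) : ℂ := (w - a) / (1 - conj a * w)

section BlaschkeFactor

variable {a w : ℂ}

lemma sq_norm_one_sub_conj_mul_sub_sq_norm_sub (a w : ℂ) :
    ‖1 - conj a * w‖ ^ 2 - ‖w - a‖ ^ 2 = (1 - ‖a‖ ^ 2) * (1 - ‖w‖ ^ 2) := by
  simp only [Complex.sq_norm, normSq_apply, sub_re, sub_im, mul_re, mul_im, conj_re, conj_im,
    one_re, one_im]
  ring

lemma one_sub_conj_mul_ne_zero (ha : ‖a‖ < 1) (hw : ‖w‖ ≤ 1) : 1 - conj a * w ≠ 0 := by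
  refine sub_ne_zero.2 fun h => ?_
  have : ‖conj a * w‖ < 1 := by
    rw [norm_mul, norm_conj]
    exact mul_lt_one_of_nonneg_of_lt_one_left (norm_nonneg a) ha hw
  rw [← h, norm_one] at this
  exact this.false

lemma blaschkeFactor_eq_zero_iff (ha : ‖a‖ < 1) (hw : ‖w‖ ≤ 1) :
    blaschkeFactor a w = 0 ↔ w = a := by
  simp [blaschkeFactor, one_sub_conj_mul_ne_zero ha hw, sub_eq_zero]

lemma one_sub_sq_norm_blaschkeFactor (ha : ‖a‖ < 1) (hw : ‖w‖ ≤ 1) :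
    1 - ‖blaschkeFactor a w‖ ^ 2 = (1 - ‖a‖ ^ 2) * (1 - ‖w‖ ^ 2) / ‖1 - conj a * w‖ ^ 2 := by
  have hd : ‖1 - conj a * w‖ ≠ 0 := norm_ne_zero_iff.2 (one_sub_conj_mul_ne_zero ha hw)
  rw [← sq_norm_one_sub_conj_mul_sub_sq_norm_sub, blaschkeFactor, norm_div, div_pow, sub_div,
    div_self (pow_ne_zero 2 hd)]

lemma one_sub_sq_norm_mul_one_sub_sq_norm_nonneg (ha : ‖a‖ < 1) (hw : ‖w‖ ≤ 1) :
    0 ≤ (1 - ‖a‖ ^ 2) * (1 - ‖w‖ ^ 2) :=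
  mul_nonneg (sub_nonneg.2 (pow_le_one₀ (norm_nonneg a) ha.le))
    (sub_nonneg.2 (pow_le_one₀ (norm_nonneg w) hw))

lemma sq_norm_blaschkeFactor_le_one (ha : ‖a‖ < 1) (hw : ‖w‖ ≤ 1) :
    ‖blaschkeFactor a w‖ ^ 2 ≤ 1 := by
  have h := one_sub_sq_norm_blaschkeFactor ha hw
  have := div_nonneg (one_sub_sq_norm_mul_one_sub_sq_norm_nonneg ha hw)
    (sq_nonneg ‖1 - conj a * w‖)
  linarith

lemma one_sub_sq_norm_mul_one_sub_sq_norm_le (ha : ‖a‖ < 1) (hw : ‖w‖ ≤ 1) :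
    (1 - ‖a‖ ^ 2) * (1 - ‖w‖ ^ 2) ≤ 4 * (1 - ‖blaschkeFactor a w‖ ^ 2) := by
  have hd : 0 < ‖1 - conj a * w‖ := norm_pos_iff.2 (one_sub_conj_mul_ne_zero ha hw)
  have hd2 : ‖1 - conj a * w‖ ≤ 2 := by
    calc ‖1 - conj a * w‖ ≤ ‖(1 : ℂ)‖ + ‖a‖ * ‖w‖ := by
          simpa using norm_sub_le (1 : ℂ) (conj a * w)
      _ ≤ 2 := by nlinarith [norm_nonneg a, norm_nonneg w, norm_one (α := ℂ)]
  rw [one_sub_sq_norm_blaschkeFactor ha hw, mul_div_assoc', le_div_iff₀ (by positivity)]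
  calc (1 - ‖a‖ ^ 2) * (1 - ‖w‖ ^ 2) * ‖1 - conj a * w‖ ^ 2
      ≤ (1 - ‖a‖ ^ 2) * (1 - ‖w‖ ^ 2) * 4 :=
        mul_le_mul_of_nonneg_left (by nlinarith) (one_sub_sq_norm_mul_one_sub_sq_norm_nonneg ha hw)
    _ = 4 * ((1 - ‖a‖ ^ 2) * (1 - ‖w‖ ^ 2)) := mul_comm _ _

/-- The left-hand side is the minimum of `‖blaschkeFactor a ·‖` on the circle of radius `ρ`,
attained at `ρ a / ‖a‖`. -/
lemma div_le_norm_blaschkeFactor {ρ : ℝ} (ha : ‖a‖ < ρ) (hρ : ρ < 1) (hw : ‖w‖ = ρ) :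
    (ρ - ‖a‖) / (1 - ‖a‖ * ρ) ≤ ‖blaschkeFactor a w‖ := by
  have ha0 := norm_nonneg a
  have hρa : 0 < 1 - ‖a‖ * ρ := by nlinarith
  have hd : 0 < ‖1 - conj a * w‖ :=
    norm_pos_iff.2 (one_sub_conj_mul_ne_zero (by linarith) (by linarith))
  rw [blaschkeFactor, norm_div, div_le_div_iff₀ hρa hd]
  have hid := sq_norm_one_sub_conj_mul_sub_sq_norm_sub a w
  have htri : ρ - ‖a‖ ≤ ‖w - a‖ := hw ▸ norm_sub_norm_le w a
  rw [hw] at hid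
  refine le_of_sq_le_sq ?_ (by positivity)
  -- `(1 - ‖a‖ ρ)² - (ρ - ‖a‖)² = (1 - ‖a‖²)(1 - ρ²)`, so this is `(ρ - ‖a‖)² ≤ ‖w - a‖²`.
  have hsq : (ρ - ‖a‖) ^ 2 ≤ ‖w - a‖ ^ 2 := pow_le_pow_left₀ (by linarith) htri 2
  have hpos : 0 ≤ (1 - ‖a‖ ^ 2) * (1 - ρ ^ 2) := mul_nonneg (by nlinarith) (by nlinarith)
  nlinarith [mul_le_mul_of_nonneg_left hsq hpos]

end BlaschkeFactor

lemma norm_le_of_forall_sphere_norm_le {g : ℂ → ℂ} {c : ℂ} {ρ R M : ℝ} (hρ : 0 < ρ) (hρR : ρ < R)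
    (hg : DifferentiableOn ℂ g (ball c R)) (hM : ∀ y ∈ sphere c ρ, ‖g y‖ ≤ M) {x : ℂ}
    (hx : x ∈ closedBall c ρ) : ‖g x‖ ≤ M := by
  have hd : DiffContOnCl ℂ g (ball c ρ) := by
    refine DifferentiableOn.diffContOnCl ?_
    rw [closure_ball c hρ.ne']
    exact hg.mono (closedBall_subset_ball hρR)
  refine norm_le_of_forall_mem_frontier_norm_le isBounded_ball hd (fun y hy => ?_) ?_
  · exact hM y (frontier_ball c hρ.ne' ▸ hy)
  · rwa [closure_ball c hρ.ne']

lemma tendsto_sub_div_one_sub_mul_nhdsLT {A : ℝ} (hA : A < 1) :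
    Tendsto (fun ρ => (ρ - A) / (1 - A * ρ)) (𝓝[<] 1) (𝓝 1) := by
  have hne : 1 - A * 1 ≠ 0 := by linarith
  have hcont : ContinuousAt (fun ρ => (ρ - A) / (1 - A * ρ)) 1 := by fun_prop (disch := exact hne)
  simpa [div_self (sub_ne_zero.2 hA.ne')] using hcont.tendsto.mono_left nhdsWithin_le_nhds

section DivisionByBlaschkeFactor

variable {g : ℂ → ℂ} {M : ℝ}

/-- On the circle of radius `ρ < 1` the quotient `h = g / blaschkeFactor a` is bounded by `M` over
the minimum of `‖blaschkeFactor a ·‖` there; by the maximum modulus principle so is `‖h x‖` for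
`‖x‖ ≤ ρ`, and that minimum tends to `1` as `ρ → 1`. -/
lemma exists_eq_blaschkeFactor_mul {a : ℂ} (hg : DifferentiableOn ℂ g (ball 0 1))
    (hM : ∀ x ∈ ball (0 : ℂ) 1, ‖g x‖ ≤ M) (ha : a ∈ ball (0 : ℂ) 1) (hga : g a = 0) :
    ∃ h : ℂ → ℂ, DifferentiableOn ℂ h (ball 0 1) ∧ (∀ x ∈ ball (0 : ℂ) 1, ‖h x‖ ≤ M) ∧
      ∀ x ∈ ball (0 : ℂ) 1, g x = blaschkeFactor a x * h x := by
  rw [mem_ball_zero_iff] at ha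
  set h : ℂ → ℂ := fun x => (1 - conj a * x) * dslope g a x
  have hfac : ∀ x, ‖x‖ ≤ 1 → g x = blaschkeFactor a x * h x := by
    intro x hx
    have hne := one_sub_conj_mul_ne_zero ha hx
    have hslope : (x - a) * dslope g a x = g x := by
      simpa [hga] using sub_smul_dslope g a x
    simp only [h, blaschkeFactor]
    rw [← hslope, div_mul_eq_mul_div, mul_left_comm, mul_div_cancel_left₀ _ hne]
  have hh : DifferentiableOn ℂ h (ball 0 1) :=
    ((differentiableOn_const 1).sub (differentiableOn_id.const_mul _)).mul
      ((differentiableOn_dslope (isOpen_ball.mem_nhds (mem_ball_zero_iff.2 ha))).2 hg)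
  refine ⟨h, hh, fun x hx => ?_, fun x hx => hfac x (mem_ball_zero_iff.1 hx).le⟩
  rw [mem_ball_zero_iff] at hx
  set c : ℝ → ℝ := fun ρ => (ρ - ‖a‖) / (1 - ‖a‖ * ρ)
  have hc : Tendsto (fun ρ => M / c ρ) (𝓝[<] 1) (𝓝 M) := by
    have hlim := (tendsto_const_nhds (x := M)).div (tendsto_sub_div_one_sub_mul_nhdsLT ha)
      one_ne_zero
    rw [div_one] at hlim
    exact hlim
  refine ge_of_tendsto hc ?_
  filter_upwards [Ioo_mem_nhdsLT (max_lt ha hx)] with ρ ⟨hρ, hρ1⟩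
  have haρ : ‖a‖ < ρ := (le_max_left _ _).trans_lt hρ
  have hxρ : ‖x‖ < ρ := (le_max_right _ _).trans_lt hρ
  have hcρ : 0 < c ρ := div_pos (by linarith) (by nlinarith [norm_nonneg a])
  refine norm_le_of_forall_sphere_norm_le ((norm_nonneg x).trans_lt hxρ) hρ1 hh (fun y hy => ?_)
    (mem_closedBall_zero_iff.2 hxρ.le)
  rw [mem_sphere_zero_iff_norm] at hy
  have hB : c ρ ≤ ‖blaschkeFactor a y‖ := div_le_norm_blaschkeFactor haρ hρ1 hy
  have hgy : ‖g y‖ ≤ M := hM y (mem_ball_zero_iff.2 (hy ▸ hρ1))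
  have hM0 : 0 ≤ M := (norm_nonneg _).trans hgy
  calc ‖h y‖ ≤ M / ‖blaschkeFactor a y‖ := by
        rw [le_div_iff₀ (hcρ.trans_le hB), mul_comm, ← norm_mul, ← hfac y (hy ▸ hρ1.le)]
        exact hgy
    _ ≤ M / c ρ := div_le_div_of_nonneg_left hM0 hcρ hB

end DivisionByBlaschkeFactor

lemma norm_le_mul_prod_norm_blaschkeFactor {g : ℂ → ℂ} {M : ℝ} {w : ℂ} (F : Finset ℂ)
    (hg : DifferentiableOn ℂ g (ball 0 1)) (hM : ∀ x ∈ ball (0 : ℂ) 1, ‖g x‖ ≤ M)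
    (hF : ∀ a ∈ F, a ∈ ball (0 : ℂ) 1) (hF0 : ∀ a ∈ F, g a = 0) (hw : w ∈ ball (0 : ℂ) 1) :
    ‖g w‖ ≤ M * ∏ a ∈ F, ‖blaschkeFactor a w‖ := by
  induction F using Finset.induction_on generalizing g with
  | empty => simpa using hM w hw
  | insert a F haF ih =>
    obtain ⟨h, hh, hhM, hgh⟩ := exists_eq_blaschkeFactor_mul hg hM (hF a (F.mem_insert_self a))
      (hF0 a (F.mem_insert_self a))
    have hF0h : ∀ b ∈ F, h b = 0 := by
      intro b hb
      have hbB := hF b (F.mem_insert_of_mem hb)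
      have hBb : blaschkeFactor a b ≠ 0 := by
        rw [ne_eq, blaschkeFactor_eq_zero_iff (mem_ball_zero_iff.1 (hF a (F.mem_insert_self a)))
          (mem_ball_zero_iff.1 hbB).le]
        exact fun hba => haF (hba ▸ hb)
      simpa [hBb, hF0 b (F.mem_insert_of_mem hb)] using (hgh b hbB).symm
    rw [hgh w hw, norm_mul, Finset.prod_insert haF, mul_left_comm]
    exact mul_le_mul_of_nonneg_left
      (ih hh hhM (fun b hb => hF b (F.mem_insert_of_mem hb)) hF0h) (norm_nonneg _)

/-- `1 - t ≤ -log t` bounds the partial sums by `-log c`. -/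
lemma summable_one_sub_of_forall_le_prod {ι : Type*} {t : ι → ℝ} {c : ℝ} (hc : 0 < c)
    (ht : ∀ i, t i ≤ 1) (hprod : ∀ s : Finset ι, c ≤ ∏ i ∈ s, t i) :
    Summable fun i => 1 - t i := by
  have htpos : ∀ i, 0 < t i := fun i => hc.trans_le (by simpa using hprod {i})
  refine summable_of_sum_le (c := -Real.log c) (fun i => sub_nonneg.2 (ht i)) fun s => ?_
  calc ∑ i ∈ s, (1 - t i) ≤ ∑ i ∈ s, -Real.log (t i) :=
        Finset.sum_le_sum fun i _ => by linarith [Real.log_le_sub_one_of_pos (htpos i)]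
    _ = -Real.log (∏ i ∈ s, t i) := by
        rw [Real.log_prod fun i _ => (htpos i).ne', Finset.sum_neg_distrib]
    _ ≤ -Real.log c := neg_le_neg (Real.log_le_log hc (hprod s))

/-- The Blaschke condition. At a point `w` with `g w ≠ 0`, the finite products
`∏ ‖blaschkeFactor (a i) w‖²` stay above `(‖g w‖ / M)²`, and `1 - ‖blaschkeFactor a w‖²` is
comparable to `1 - ‖a‖²`. -/
theorem summable_one_sub_sq_norm_of_zeros {ι : Type*} {g : ℂ → ℂ} {M : ℝ} {w : ℂ}
    {a : ι → ℂ} (hg : DifferentiableOn ℂ g (ball 0 1)) (hM : ∀ x ∈ ball (0 : ℂ) 1, ‖g x‖ ≤ M)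
    (hw : w ∈ ball (0 : ℂ) 1) (hgw : g w ≠ 0) (hainj : Injective a)
    (ha : ∀ i, a i ∈ ball (0 : ℂ) 1) (ha0 : ∀ i, g (a i) = 0) :
    Summable fun i => 1 - ‖a i‖ ^ 2 := by
  have hw1 := mem_ball_zero_iff.1 hw
  have hgw0 : 0 < ‖g w‖ := norm_pos_iff.2 hgw
  have hM0 : 0 < M := hgw0.trans_le (hM w hw)
  set t : ι → ℝ := fun i => ‖blaschkeFactor (a i) w‖ ^ 2
  have hprod : ∀ s : Finset ι, (‖g w‖ / M) ^ 2 ≤ ∏ i ∈ s, t i := by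
    intro s
    have hs := norm_le_mul_prod_norm_blaschkeFactor (s.image a) hg hM
      (by simpa using fun i _ => ha i) (by simpa using fun i _ => ha0 i) hw
    rw [Finset.prod_image fun i _ j _ hij => hainj hij, ← div_le_iff₀' hM0] at hs
    rw [Finset.prod_pow]
    exact pow_le_pow_left₀ (div_nonneg hgw0.le hM0.le) hs 2
  have hsum := summable_one_sub_of_forall_le_prod (by positivity)
    (fun i => sq_norm_blaschkeFactor_le_one (mem_ball_zero_iff.1 (ha i)) hw1.le) hprod
  have hw2 : 0 < 1 - ‖w‖ ^ 2 := by nlinarith [norm_nonneg w]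
  refine (hsum.mul_left (4 / (1 - ‖w‖ ^ 2))).of_nonneg_of_le
    (fun i => sub_nonneg.2 (pow_le_one₀ (norm_nonneg _) (mem_ball_zero_iff.1 (ha i)).le))
    fun i => ?_
  rw [div_mul_eq_mul_div, le_div_iff₀ hw2]
  exact one_sub_sq_norm_mul_one_sub_sq_norm_le (mem_ball_zero_iff.1 (ha i)) hw1.le

section Cayley

variable {E w : ℂ}

lemma sq_norm_add_one_sub_sq_norm_sub_one (E : ℂ) : ‖E + 1‖ ^ 2 - ‖E - 1‖ ^ 2 = 4 * E.re := by
  simp only [Complex.sq_norm, normSq_apply, add_re, add_im, sub_re, sub_im, one_re, one_im]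
  ring

lemma sq_norm_sub_one_mul_sq_norm_add_one (E : ℂ) :
    ‖E - 1‖ ^ 2 * ‖E + 1‖ ^ 2 = (‖E‖ ^ 2 + 1) ^ 2 - 4 * E.re ^ 2 := by
  simp only [Complex.sq_norm, normSq_apply, add_re, add_im, sub_re, sub_im, one_re, one_im]
  ring

lemma add_one_ne_zero_of_re_pos (hE : 0 < E.re) : E + 1 ≠ 0 := by
  intro h
  have := congrArg re h
  simp only [add_re, one_re, zero_re] at this
  linarith

lemma norm_sub_one_div_add_one_lt_one (hE : 0 < E.re) : ‖(E - 1) / (E + 1)‖ < 1 := by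
  have hd : 0 < ‖E + 1‖ := norm_pos_iff.2 (add_one_ne_zero_of_re_pos hE)
  rw [norm_div, div_lt_one hd]
  have := sq_norm_add_one_sub_sq_norm_sub_one E
  exact lt_of_pow_lt_pow_left₀ 2 hd.le (by linarith)

lemma re_one_add_div_one_sub_pos (hw : ‖w‖ < 1) : 0 < ((1 + w) / (1 - w)).re := by
  have hd : 1 - w ≠ 0 := sub_ne_zero.2 fun h => by simp [← h] at hw
  have hnum : ((1 + w) * conj (1 - w)).re = 1 - ‖w‖ ^ 2 := by
    simp only [Complex.sq_norm, normSq_apply, mul_re, add_re, add_im, sub_re, sub_im, conj_re,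
      conj_im, one_re, one_im]
    ring
  rw [div_eq_mul_inv, inv_def, ← mul_assoc, re_mul_ofReal, hnum]
  exact mul_pos (by nlinarith [norm_nonneg w]) (inv_pos.2 (normSq_pos.2 hd))

lemma one_add_div_one_sub_cayley (hE : E + 1 ≠ 0) :
    (1 + (E - 1) / (E + 1)) / (1 - (E - 1) / (E + 1)) = E := by
  field_simp
  ring

/-- Both sides are `0` at `E = 1`, through division by zero. -/
lemma re_div_norm_mul_norm_eq (hE : E + 1 ≠ 0) :
    E.re / (‖E - 1‖ * ‖E + 1‖) =
      (1 - ‖(E - 1) / (E + 1)‖ ^ 2) / (4 * ‖(E - 1) / (E + 1)‖) := by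
  have hd : ‖E + 1‖ ≠ 0 := norm_ne_zero_iff.2 hE
  have hid := sq_norm_add_one_sub_sq_norm_sub_one E
  rcases eq_or_ne ‖E - 1‖ 0 with h0 | h0
  · simp [h0]
  rw [norm_div, div_pow, one_sub_div (pow_ne_zero 2 hd), hid]
  field_simp

end Cayley

section Strip

variable {r : ℝ} {z w : ℂ}

noncomputable def stripToDisc (r : ℝ) (z : ℂ) : ℂ :=
  (exp (↑(π / (2 * r)) * z) - 1) / (exp (↑(π / (2 * r)) * z) + 1)

noncomputable def discToStrip (r : ℝ) (w : ℂ) : ℂ :=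
  ↑(2 * r / π) * log ((1 + w) / (1 - w))

lemma abs_im_mul_lt_pi_div_two (hr : 0 < r) (hz : z ∈ strip r) :
    |(↑(π / (2 * r)) * z).im| < π / 2 := by
  rw [im_ofReal_mul, abs_mul, abs_of_pos (by positivity)]
  calc π / (2 * r) * |z.im| < π / (2 * r) * r := mul_lt_mul_of_pos_left hz (by positivity)
    _ = π / 2 := by field_simp

lemma re_exp_pos (hr : 0 < r) (hz : z ∈ strip r) : 0 < (exp (↑(π / (2 * r)) * z)).re := by
  rw [exp_re]
  exact mul_pos (Real.exp_pos _)
    (Real.cos_pos_of_mem_Ioo (abs_lt.1 (abs_im_mul_lt_pi_div_two hr hz)))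

lemma stripToDisc_mem_ball (hr : 0 < r) (hz : z ∈ strip r) : stripToDisc r z ∈ ball (0 : ℂ) 1 :=
  mem_ball_zero_iff.2 (norm_sub_one_div_add_one_lt_one (re_exp_pos hr hz))

lemma discToStrip_mem_strip (hr : 0 < r) (hw : w ∈ ball (0 : ℂ) 1) :
    discToStrip r w ∈ strip r := by
  have harg := abs_arg_lt_pi_div_two_iff.2
    (Or.inl (re_one_add_div_one_sub_pos (mem_ball_zero_iff.1 hw)))
  show |(discToStrip r w).im| < r
  rw [discToStrip, im_ofReal_mul, log_im, abs_mul, abs_of_pos (by positivity)]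
  calc 2 * r / π * |arg ((1 + w) / (1 - w))| < 2 * r / π * (π / 2) :=
        mul_lt_mul_of_pos_left harg (by positivity)
    _ = r := by field_simp

lemma differentiableOn_discToStrip (r : ℝ) : DifferentiableOn ℂ (discToStrip r) (ball 0 1) := by
  intro w hw
  have hw1 := mem_ball_zero_iff.1 hw
  have hd : 1 - w ≠ 0 := sub_ne_zero.2 fun h => by simp [← h] at hw1
  refine (DifferentiableAt.const_mul (DifferentiableAt.clog ?_ ?_) _).differentiableWithinAt
  · exact ((differentiableAt_const 1).add differentiableAt_id).div
      ((differentiableAt_const 1).sub differentiableAt_id) hd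
  · exact mem_slitPlane_iff.2 (Or.inl (re_one_add_div_one_sub_pos hw1))

lemma discToStrip_stripToDisc (hr : 0 < r) (hz : z ∈ strip r) :
    discToStrip r (stripToDisc r z) = z := by
  have him := abs_lt.1 (abs_im_mul_lt_pi_div_two hr hz)
  rw [discToStrip, stripToDisc, one_add_div_one_sub_cayley (add_one_ne_zero_of_re_pos
    (re_exp_pos hr hz)), log_exp (by linarith [Real.pi_pos]) (by linarith [Real.pi_pos]),
    ← mul_assoc, ← ofReal_mul, div_mul_div_comm, mul_comm (2 * r), div_self (by positivity),
    ofReal_one, one_mul]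

end Strip

lemma summand_eq_of_mem_strip {r : ℝ} {z : ℂ} (hr : 0 < r) (hz : z ∈ strip r) :
    Real.exp (π * z.re / (2 * r)) * Real.cos (π * z.im / (2 * r)) /
        Real.sqrt ((Real.exp (π * z.re / r) + 1) ^ 2 -
          4 * Real.exp (π * z.re / r) * Real.cos (π * z.im / (2 * r)) ^ 2) =
      (1 - ‖stripToDisc r z‖ ^ 2) / (4 * ‖stripToDisc r z‖) := by
  set E := exp (↑(π / (2 * r)) * z)
  have hre : E.re = Real.exp (π * z.re / (2 * r)) * Real.cos (π * z.im / (2 * r)) := by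
    rw [exp_re, re_ofReal_mul, im_ofReal_mul]
    ring_nf
  have hnorm : ‖E‖ = Real.exp (π * z.re / (2 * r)) := by
    rw [norm_exp, re_ofReal_mul]
    ring_nf
  have hexp : Real.exp (π * z.re / r) = Real.exp (π * z.re / (2 * r)) ^ 2 := by
    rw [← Real.exp_nat_mul]
    congr 1
    field_simp
    norm_num
  have hrad : (Real.exp (π * z.re / r) + 1) ^ 2 -
      4 * Real.exp (π * z.re / r) * Real.cos (π * z.im / (2 * r)) ^ 2 =
        (‖E - 1‖ * ‖E + 1‖) ^ 2 := by
    rw [mul_pow, sq_norm_sub_one_mul_sq_norm_add_one, hnorm, hre, hexp]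
    ring
  rw [hrad, Real.sqrt_sq (by positivity), ← hre, stripToDisc,
    re_div_norm_mul_norm_eq (add_one_ne_zero_of_re_pos (re_exp_pos hr hz))]

lemma summable_one_sub_sq_norm_div_four_mul_norm {ι : Type*} {a : ι → ℂ}
    (h : Summable fun i => 1 - ‖a i‖ ^ 2) :
    Summable fun i => (1 - ‖a i‖ ^ 2) / (4 * ‖a i‖) := by
  refine (h.abs.mul_left (1 / 2)).of_norm_bounded_eventually ?_
  filter_upwards [h.tendsto_cofinite_zero.eventually (gt_mem_nhds (by norm_num : (0 : ℝ) < 3 / 4))]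
    with i hi
  have ha : 1 / 2 < ‖a i‖ := by nlinarith [norm_nonneg (a i)]
  rw [Real.norm_eq_abs, abs_div, abs_of_pos (by linarith : 0 < 4 * ‖a i‖),
    div_le_iff₀ (by linarith)]
  nlinarith [abs_nonneg (1 - ‖a i‖ ^ 2)]

theorem stmt5 (r : ℝ) (hr : 0 < r) (f : ℂ → ℂ)
    (hf : DifferentiableOn ℂ f (strip r))
    (hb : ∃ M : ℝ, ∀ z ∈ strip r, ‖f z‖ ≤ M)
    (hnz : ∃ z ∈ strip r, f z ≠ 0)
    (z : ℕ → ℂ) (hzinj : Function.Injective z)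
    (hzs : ∀ n, z n ∈ strip r) (hzf : ∀ n, f (z n) = 0) :
    Summable (fun n : ℕ =>
      Real.exp (Real.pi * (z n).re / (2*r)) * Real.cos (Real.pi * (z n).im / (2*r)) /
        Real.sqrt ((Real.exp (Real.pi * (z n).re / r) + 1)^2 -
          4 * Real.exp (Real.pi * (z n).re / r) * Real.cos (Real.pi * (z n).im / (2*r))^2)) := by
  obtain ⟨M, hM⟩ := hb
  obtain ⟨z₀, hz₀, hfz₀⟩ := hnz
  have hinv : ∀ {x}, x ∈ strip r → discToStrip r (stripToDisc r x) = x :=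
    discToStrip_stripToDisc hr
  have hinj : Injective fun n => stripToDisc r (z n) := fun m n hmn =>
    hzinj <| by simpa [hinv (hzs m), hinv (hzs n)] using congrArg (discToStrip r) hmn
  have hg : DifferentiableOn ℂ (f ∘ discToStrip r) (ball 0 1) :=
    hf.comp (differentiableOn_discToStrip r) fun w hw => discToStrip_mem_strip hr hw
  have hblaschke : Summable fun n => 1 - ‖stripToDisc r (z n)‖ ^ 2 :=
    summable_one_sub_sq_norm_of_zeros hg (fun w hw => hM _ (discToStrip_mem_strip hr hw))
      (stripToDisc_mem_ball hr hz₀) (by simpa [hinv hz₀] using hfz₀) hinj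
      (fun n => stripToDisc_mem_ball hr (hzs n)) (fun n => by simpa [hinv (hzs n)] using hzf n)
  simpa only [summand_eq_of_mem_strip hr (hzs _)] using
    summable_one_sub_sq_norm_div_four_mul_norm hblaschke
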